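/- Let p₀ be a positive integer and γ₀ ∈ ℝ with p₀ − 2 > γ₀ > 4, let c₀ > 0, p ≥ 1, s₀ ≥ 0, δ₁ > 0 and K ≥ 0. Let (Y_r)_{r ∈ [s₀, s₀+δ₁]} be a jointly measurable family of nonnegative random variables on a probability space (Ω, F, P) such that r ↦ Y_r(ω) is nondecreasing for every ω, and E[|Y_r|^p] ≤ K (r − s₀)^{2p} δ₁^{(p₀ − γ₀)p/2} for all r ∈ [s₀, s₀ + δ₁]. For z₂ ≥ δ₁^{1/4}, set a := z₂/2, R := c₀ a^{2p₀} δ₁^{−(γ₀ − 4)/2}, and let X̄(ω) denote the Lebesgue measure of the set {r ∈ [s₀, s₀ + δ₁] : Y_r(ω) ≤ R/2}. Then there exists a constant c, depending only on p, p₀, γ₀, c₀ and K (and not on s₀, δ₁ or z₂), such that E[X̄^{−p}] ≤ c δ₁^{−p}. -/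

import Mathlib

open MeasureTheory Set Real

set_option maxHeartbeats 1600000 in
/-- Core of Lemma 6.3(a) of the paper: negative-moment bound of order `δ₁^{-p}` for the time
`X̄` that the nondecreasing process `(Y_r)` spends below the threshold `R/2`, where
`R = c₀ (z₂/2)^{2p₀} δ₁^{-(γ₀-4)/2}` and `z₂ ≥ δ₁^{1/4}`, the constant `c` depending only on
`p, p₀, γ₀, c₀, K` and not on `s₀, δ₁, z₂`. -/
theorem stmt10 (p₀ : ℕ) (γ₀ : ℝ) (hp₀ : 0 < p₀) (h4 : 4 < γ₀) (hγ : γ₀ < (p₀ : ℝ) - 2)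
    (c₀ p K : ℝ) (hc₀ : 0 < c₀) (hp : 1 ≤ p) (hK : 0 ≤ K) :
    ∃ c : ℝ, 0 < c ∧
      ∀ (s₀ δ₁ : ℝ), 0 ≤ s₀ → 0 < δ₁ →
      ∀ (Ω : Type) (_ : MeasurableSpace Ω) (P : Measure Ω), IsProbabilityMeasure P →
      ∀ (Y : ℝ → Ω → ℝ),
        Measurable (fun q : ℝ × Ω => Y q.1 q.2) →
        (∀ r ω, 0 ≤ Y r ω) →
        (∀ ω, MonotoneOn (fun r => Y r ω) (Icc s₀ (s₀ + δ₁))) →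
        (∀ r ∈ Icc s₀ (s₀ + δ₁),
          ∫⁻ ω, ENNReal.ofReal (|Y r ω| ^ p) ∂P ≤
            ENNReal.ofReal (K * (r - s₀) ^ (2 * p) * δ₁ ^ (((p₀ : ℝ) - γ₀) * p / 2))) →
        ∀ z₂ : ℝ, δ₁ ^ (1/4 : ℝ) ≤ z₂ →
          ∫⁻ ω, ENNReal.ofReal
              ((volume {r ∈ Icc s₀ (s₀ + δ₁) |
                  Y r ω ≤ c₀ * (z₂ / 2) ^ (2 * p₀) * δ₁ ^ (-(γ₀ - 4) / 2) / 2}).toReal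
                ^ (-p)) ∂P ≤
            ENNReal.ofReal (c * δ₁ ^ (-p)) := by
  have hpp : 0 < p := lt_of_lt_of_le one_pos hp
  set m : ℝ := K * 2 ^ ((2 * (p₀ : ℝ) + 1) * p) / c₀ ^ p with hm_def
  have hm : 0 ≤ m := by positivity
  refine ⟨m + 2, by positivity, ?_⟩
  intro s₀ δ₁ hs₀ hδ₁ Ω mΩ P hP Y hYmeas hYnn hYmono hYmom z₂ hz₂
  set R2 : ℝ := c₀ * (z₂ / 2) ^ (2 * p₀) * δ₁ ^ (-(γ₀ - 4) / 2) / 2 with hR2_def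
  set X : Ω → ℝ := fun ω => (volume {r ∈ Icc s₀ (s₀ + δ₁) | Y r ω ≤ R2}).toReal with hX_def
  have hδ14 : (0 : ℝ) < δ₁ ^ (1/4 : ℝ) := Real.rpow_pos_of_pos hδ₁ _
  have hz₂pos : 0 < z₂ := lt_of_lt_of_le hδ14 hz₂
  have hR2pos : 0 < R2 := by
    have h1 : (0:ℝ) < (z₂ / 2) ^ (2 * p₀) := pow_pos (by linarith) _
    have h2 : (0:ℝ) < δ₁ ^ (-(γ₀ - 4) / 2) := Real.rpow_pos_of_pos hδ₁ _
    rw [hR2_def]; positivity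
  -- lower bound on R2
  have hL : c₀ * 2 ^ (-(2 * (p₀ : ℝ) + 1)) * δ₁ ^ (((p₀ : ℝ) - γ₀ + 4) / 2) ≤ R2 := by
    have h1 : (δ₁ ^ (1/4 : ℝ) / 2) ^ (2 * p₀) ≤ (z₂ / 2) ^ (2 * p₀) :=
      pow_le_pow_left₀ (by positivity) (by linarith) _
    have h2 : (δ₁ ^ (1/4 : ℝ)) ^ (2 * p₀) = δ₁ ^ ((p₀ : ℝ) / 2) := by
      rw [← Real.rpow_natCast (δ₁ ^ (1/4 : ℝ)) (2 * p₀), ← Real.rpow_mul hδ₁.le]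
      congr 1; push_cast; ring
    have h3 : (2 : ℝ) ^ (-(2 * (p₀ : ℝ) + 1)) = ((2:ℝ) ^ (2 * p₀) * 2)⁻¹ := by
      rw [Real.rpow_neg (by norm_num), Real.rpow_add (by norm_num : (0:ℝ) < 2),
        Real.rpow_one]
      congr 2
      rw [← Real.rpow_natCast (2:ℝ) (2 * p₀)]
      congr 1; push_cast; ring
    have h4' : δ₁ ^ ((p₀ : ℝ) / 2) * δ₁ ^ (-(γ₀ - 4) / 2) = δ₁ ^ (((p₀ : ℝ) - γ₀ + 4) / 2) := by
      rw [← Real.rpow_add hδ₁]; congr 1; ring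
    have key : c₀ * 2 ^ (-(2 * (p₀ : ℝ) + 1)) * δ₁ ^ (((p₀ : ℝ) - γ₀ + 4) / 2)
        = c₀ * (δ₁ ^ (1/4 : ℝ) / 2) ^ (2 * p₀) * δ₁ ^ (-(γ₀ - 4) / 2) / 2 := by
      rw [h3, div_pow, h2, ← h4']
      have h2p : (0:ℝ) < (2:ℝ) ^ (2 * p₀) := by positivity
      field_simp
    rw [key, hR2_def]
    have h2' : (0:ℝ) < δ₁ ^ (-(γ₀ - 4) / 2) := Real.rpow_pos_of_pos hδ₁ _
    gcongr
  have hLppos : (0:ℝ) < c₀ * 2 ^ (-(2 * (p₀ : ℝ) + 1)) := by positivity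
  have hR2p : (c₀ * 2 ^ (-(2 * (p₀ : ℝ) + 1))) ^ p * δ₁ ^ ((((p₀ : ℝ) - γ₀ + 4) / 2) * p)
      ≤ R2 ^ p := by
    have h := Real.rpow_le_rpow (by positivity) hL hpp.le
    rwa [Real.mul_rpow hLppos.le (Real.rpow_nonneg hδ₁.le _),
      ← Real.rpow_mul hδ₁.le] at h
  have hR2ppos : (0:ℝ) < R2 ^ p := Real.rpow_pos_of_pos hR2pos p
  -- the crucial real-number inequality for the Markov bound
  have hreal : ∀ ε : ℝ, 0 ≤ ε →
      K * ε ^ (2 * p) * δ₁ ^ (((p₀ : ℝ) - γ₀) * p / 2) / R2 ^ p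
        ≤ m * δ₁ ^ (-(2 * p)) * ε ^ (2 * p) := by
    intro ε hε
    have hε2p : 0 ≤ ε ^ (2 * p) := Real.rpow_nonneg hε _
    have hLp : (0:ℝ) < (c₀ * 2 ^ (-(2 * (p₀ : ℝ) + 1))) ^ p * δ₁ ^ ((((p₀ : ℝ) - γ₀ + 4) / 2) * p) := by
      have := Real.rpow_pos_of_pos hLppos p
      have := Real.rpow_pos_of_pos hδ₁ ((((p₀ : ℝ) - γ₀ + 4) / 2) * p)
      positivity
    calc K * ε ^ (2 * p) * δ₁ ^ (((p₀ : ℝ) - γ₀) * p / 2) / R2 ^ p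
        ≤ K * ε ^ (2 * p) * δ₁ ^ (((p₀ : ℝ) - γ₀) * p / 2)
            / ((c₀ * 2 ^ (-(2 * (p₀ : ℝ) + 1))) ^ p * δ₁ ^ ((((p₀ : ℝ) - γ₀ + 4) / 2) * p)) := by
          apply div_le_div_of_nonneg_left _ hLp hR2p
          have := Real.rpow_nonneg hδ₁.le (((p₀ : ℝ) - γ₀) * p / 2)
          positivity
      _ = m * δ₁ ^ (-(2 * p)) * ε ^ (2 * p) := by
          have hsplit : δ₁ ^ (((p₀ : ℝ) - γ₀) * p / 2)
              = δ₁ ^ (-(2 * p)) * δ₁ ^ ((((p₀ : ℝ) - γ₀ + 4) / 2) * p) := by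
            rw [← Real.rpow_add hδ₁]; congr 1; ring
          have hcp : (c₀ * 2 ^ (-(2 * (p₀ : ℝ) + 1))) ^ p
              = c₀ ^ p / 2 ^ ((2 * (p₀ : ℝ) + 1) * p) := by
            rw [Real.mul_rpow hc₀.le (by positivity), ← Real.rpow_mul (by norm_num : (0:ℝ) ≤ 2),
              neg_mul, Real.rpow_neg (by norm_num), div_eq_mul_inv]
          have hd1 : (0:ℝ) < δ₁ ^ ((((p₀ : ℝ) - γ₀ + 4) / 2) * p) := Real.rpow_pos_of_pos hδ₁ _
          have hd2 : (0:ℝ) < (2:ℝ) ^ ((2 * (p₀ : ℝ) + 1) * p) := Real.rpow_pos_of_pos (by norm_num) _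
          have hcp0 : (0:ℝ) < c₀ ^ p := Real.rpow_pos_of_pos hc₀ _
          rw [hsplit, hcp, hm_def]
          field_simp
  -- Step 1: the Markov / monotonicity bound
  have key : ∀ ε : ℝ, 0 < ε → ε ≤ δ₁ →
      P {ω | X ω < ε} ≤ ENNReal.ofReal (m * δ₁ ^ (-(2 * p)) * ε ^ (2 * p)) := by
    intro ε hε hεδ
    have hsub : {ω | X ω < ε} ⊆ {ω | R2 ≤ Y (s₀ + ε) ω} := by
      intro ω hω
      by_contra hcon
      rw [mem_setOf_eq, not_le] at hcon
      have hsub2 : Icc s₀ (s₀ + ε) ⊆ {r ∈ Icc s₀ (s₀ + δ₁) | Y r ω ≤ R2} := by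
        intro r hr
        have hrmem : r ∈ Icc s₀ (s₀ + δ₁) := ⟨hr.1, hr.2.trans (by linarith)⟩
        refine ⟨hrmem, ?_⟩
        have := hYmono ω hrmem ⟨by linarith, by linarith⟩ hr.2
        exact le_of_lt (lt_of_le_of_lt this hcon)
      have hvol : ENNReal.ofReal ε ≤ volume {r ∈ Icc s₀ (s₀ + δ₁) | Y r ω ≤ R2} := by
        calc ENNReal.ofReal ε = volume (Icc s₀ (s₀ + ε)) := by
              rw [Real.volume_Icc]; congr 1; ring
          _ ≤ _ := measure_mono hsub2
      have hfin : volume {r ∈ Icc s₀ (s₀ + δ₁) | Y r ω ≤ R2} ≠ ⊤ := by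
        apply ne_top_of_le_ne_top _ (measure_mono (sep_subset _ _))
        simp [Real.volume_Icc]
      have hXB : ε ≤ X ω := by
        have h := ENNReal.toReal_mono hfin hvol
        rwa [ENNReal.toReal_ofReal hε.le] at h
      exact absurd hω (not_lt.mpr hXB)
    have hYm : Measurable (Y (s₀ + ε)) := hYmeas.comp measurable_prodMk_left
    have hfm : Measurable fun ω => ENNReal.ofReal (|Y (s₀ + ε) ω| ^ p) := by fun_prop
    have hsub3 : {ω | R2 ≤ Y (s₀ + ε) ω}
        ⊆ {ω | ENNReal.ofReal (R2 ^ p) ≤ ENNReal.ofReal (|Y (s₀ + ε) ω| ^ p)} := by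
      intro ω hω
      apply ENNReal.ofReal_le_ofReal
      rw [abs_of_nonneg (hYnn _ _)]
      exact Real.rpow_le_rpow hR2pos.le hω hpp.le
    have hmarkov := mul_meas_ge_le_lintegral₀ (μ := P) hfm.aemeasurable (ENNReal.ofReal (R2 ^ p))
    have hmem : s₀ + ε ∈ Icc s₀ (s₀ + δ₁) := ⟨by linarith, by linarith⟩
    have hmom := hYmom (s₀ + ε) hmem
    rw [add_sub_cancel_left] at hmom
    have hchain : ENNReal.ofReal (R2 ^ p) * P {ω | X ω < ε}
        ≤ ENNReal.ofReal (K * ε ^ (2 * p) * δ₁ ^ (((p₀ : ℝ) - γ₀) * p / 2)) := by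
      calc ENNReal.ofReal (R2 ^ p) * P {ω | X ω < ε}
          ≤ ENNReal.ofReal (R2 ^ p) * P {ω | ENNReal.ofReal (R2 ^ p)
              ≤ ENNReal.ofReal (|Y (s₀ + ε) ω| ^ p)} := by
            exact mul_le_mul_right (measure_mono (hsub.trans hsub3)) _
        _ ≤ ∫⁻ ω, ENNReal.ofReal (|Y (s₀ + ε) ω| ^ p) ∂P := hmarkov
        _ ≤ _ := hmom
    have hR2ne : ENNReal.ofReal (R2 ^ p) ≠ 0 := by
      simp [ENNReal.ofReal_eq_zero, not_le, hR2ppos]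
    have hdiv : P {ω | X ω < ε}
        ≤ ENNReal.ofReal (K * ε ^ (2 * p) * δ₁ ^ (((p₀ : ℝ) - γ₀) * p / 2))
          / ENNReal.ofReal (R2 ^ p) := by
      rw [ENNReal.le_div_iff_mul_le (Or.inl hR2ne) (Or.inl ENNReal.ofReal_ne_top)]
      rwa [mul_comm]
    refine hdiv.trans ?_
    rw [← ENNReal.ofReal_div_of_pos hR2ppos]
    exact ENNReal.ofReal_le_ofReal (hreal ε hε.le)
  -- measurability of X
  have hS : MeasurableSet {q : ℝ × Ω | q.1 ∈ Icc s₀ (s₀ + δ₁) ∧ Y q.1 q.2 ≤ R2} :=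
    (measurable_fst measurableSet_Icc).inter (hYmeas measurableSet_Iic)
  have hXmeas : Measurable X := by
    have h := measurable_measure_prodMk_right (μ := (volume : Measure ℝ)) hS
    have heq : ∀ ω : Ω, ((fun r => (r, ω)) ⁻¹' {q : ℝ × Ω | q.1 ∈ Icc s₀ (s₀ + δ₁) ∧ Y q.1 q.2 ≤ R2})
        = {r ∈ Icc s₀ (s₀ + δ₁) | Y r ω ≤ R2} := fun ω => rfl
    simp only [heq] at h
    exact ENNReal.measurable_toReal.comp h
  have hfmeas : Measurable fun ω => X ω ^ (-p) := by fun_prop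
  -- layer cake
  have hlc : ∫⁻ ω, ENNReal.ofReal (X ω ^ (-p)) ∂P
      = ∫⁻ t in Ioi (0:ℝ), P {a | t < X a ^ (-p)} :=
    lintegral_eq_lintegral_meas_lt P
      (Filter.Eventually.of_forall fun ω => Real.rpow_nonneg ENNReal.toReal_nonneg _)
      hfmeas.aemeasurable
  set T : ℝ := (1 + m) * δ₁ ^ (-p) with hT_def
  have hdpos : (0:ℝ) < δ₁ ^ (-p) := Real.rpow_pos_of_pos hδ₁ _
  have hT : 0 < T := by positivity
  have hTδ : δ₁ ^ (-p) ≤ T := by nlinarith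
  -- tail bound
  have htail : ∀ t : ℝ, t ∈ Ioi T →
      P {a | t < X a ^ (-p)} ≤ ENNReal.ofReal (m * δ₁ ^ (-(2 * p)) * t ^ (-2 : ℝ)) := by
    intro t ht
    rw [mem_Ioi] at ht
    have ht0 : 0 < t := lt_trans hT ht
    have hpne : p ≠ 0 := ne_of_gt hpp
    have hneg : -(1/p) < 0 := by
      have h01 : (0:ℝ) < 1/p := by positivity
      linarith
    set ε : ℝ := t ^ (-(1/p)) with hε_def
    have hεpos : 0 < ε := Real.rpow_pos_of_pos ht0 _
    have hexp1 : (-p) * (-(1/p)) = 1 := by field_simp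
    have hεδ : ε ≤ δ₁ := by
      have h1 : δ₁ ^ (-p) ≤ t := le_of_lt (lt_of_le_of_lt hTδ ht)
      have h2 : t ^ (-(1/p)) ≤ (δ₁ ^ (-p)) ^ (-(1/p)) :=
        Real.rpow_le_rpow_of_nonpos hdpos h1 hneg.le
      rwa [← Real.rpow_mul hδ₁.le, hexp1, Real.rpow_one] at h2
    have hsub : {a | t < X a ^ (-p)} ⊆ {a | X a < ε} := by
      intro a ha
      simp only [mem_setOf_eq] at ha ⊢
      have hXnn : 0 ≤ X a := ENNReal.toReal_nonneg
      rcases eq_or_lt_of_le hXnn with h0 | h0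
      · exfalso
        rw [← h0, Real.zero_rpow (by linarith : -p ≠ 0)] at ha
        linarith
      · have hlt := Real.rpow_lt_rpow_of_neg ht0 ha hneg
        rwa [← Real.rpow_mul h0.le, hexp1, Real.rpow_one] at hlt
    have hεp : ε ^ (2 * p) = t ^ (-2 : ℝ) := by
      rw [hε_def, ← Real.rpow_mul ht0.le]
      congr 1
      field_simp
    calc P {a | t < X a ^ (-p)} ≤ P {a | X a < ε} := measure_mono hsub
      _ ≤ ENNReal.ofReal (m * δ₁ ^ (-(2 * p)) * ε ^ (2 * p)) := key ε hεpos hεδ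
      _ = _ := by rw [hεp]
  -- put things together
  have hgoal : ∫⁻ t in Ioi (0:ℝ), P {a | t < X a ^ (-p)}
      ≤ ENNReal.ofReal ((m + 2) * δ₁ ^ (-p)) := by
    have hsplit : ∫⁻ t in Ioi (0:ℝ), P {a | t < X a ^ (-p)}
        = (∫⁻ t in Ioc 0 T, P {a | t < X a ^ (-p)})
          + ∫⁻ t in Ioi T, P {a | t < X a ^ (-p)} := by
      rw [← Ioc_union_Ioi_eq_Ioi hT.le, lintegral_union measurableSet_Ioi (Ioc_disjoint_Ioi le_rfl)]
    have h1 : ∫⁻ t in Ioc 0 T, P {a | t < X a ^ (-p)} ≤ ENNReal.ofReal T := by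
      calc ∫⁻ t in Ioc 0 T, P {a | t < X a ^ (-p)}
          ≤ ∫⁻ _ in Ioc (0:ℝ) T, 1 := lintegral_mono fun t => prob_le_one
        _ = ENNReal.ofReal T := by simp [Real.volume_Ioc]
    have hintg : IntegrableOn (fun t : ℝ => m * δ₁ ^ (-(2 * p)) * t ^ (-2 : ℝ)) (Ioi T) :=
      (integrableOn_Ioi_rpow_of_lt (by norm_num) hT).const_mul _
    have h2 : ∫⁻ t in Ioi T, P {a | t < X a ^ (-p)}
        ≤ ENNReal.ofReal (m * δ₁ ^ (-(2 * p)) * T⁻¹) := by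
      calc ∫⁻ t in Ioi T, P {a | t < X a ^ (-p)}
          ≤ ∫⁻ t in Ioi T, ENNReal.ofReal (m * δ₁ ^ (-(2 * p)) * t ^ (-2 : ℝ)) :=
            setLIntegral_mono (by fun_prop) htail
        _ = ENNReal.ofReal (∫ t in Ioi T, m * δ₁ ^ (-(2 * p)) * t ^ (-2 : ℝ)) := by
            rw [ofReal_integral_eq_lintegral_ofReal hintg]
            exact (ae_restrict_mem measurableSet_Ioi).mono fun t ht => by
              have ht0 : 0 < t := lt_trans hT ht
              have := Real.rpow_nonneg hδ₁.le (-(2 * p))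
              have := Real.rpow_nonneg ht0.le (-2 : ℝ)
              positivity
        _ = ENNReal.ofReal (m * δ₁ ^ (-(2 * p)) * T⁻¹) := by
            congr 1
            rw [integral_const_mul, integral_Ioi_rpow_of_lt (by norm_num) hT]
            norm_num [Real.rpow_neg_one]
    have hfinal : T + m * δ₁ ^ (-(2 * p)) * T⁻¹ ≤ (m + 2) * δ₁ ^ (-p) := by
      have hdd : δ₁ ^ (-(2 * p)) = (δ₁ ^ (-p)) ^ (2 : ℕ) := by
        rw [← Real.rpow_natCast (δ₁ ^ (-p)) 2, ← Real.rpow_mul hδ₁.le]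
        congr 1; push_cast; ring
      rw [hdd, hT_def]
      rw [mul_inv, ← mul_assoc]
      have h1m : (0:ℝ) < 1 + m := by linarith
      have hle : m * (δ₁ ^ (-p)) ^ (2:ℕ) * (1 + m)⁻¹ * (δ₁ ^ (-p))⁻¹ ≤ δ₁ ^ (-p) := by
        rw [pow_two]
        have : m * (δ₁ ^ (-p) * δ₁ ^ (-p)) * (1 + m)⁻¹ * (δ₁ ^ (-p))⁻¹
            = (m / (1 + m)) * δ₁ ^ (-p) := by field_simp
        rw [this]
        have hq : m / (1 + m) ≤ 1 := by
          rw [div_le_one h1m]; linarith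
        nlinarith
      nlinarith
    calc ∫⁻ t in Ioi (0:ℝ), P {a | t < X a ^ (-p)}
        ≤ ENNReal.ofReal T + ENNReal.ofReal (m * δ₁ ^ (-(2 * p)) * T⁻¹) := by
          rw [hsplit]; exact add_le_add h1 h2
      _ = ENNReal.ofReal (T + m * δ₁ ^ (-(2 * p)) * T⁻¹) := by
          rw [← ENNReal.ofReal_add hT.le]
          have := Real.rpow_nonneg hδ₁.le (-(2 * p))
          positivity
      _ ≤ _ := ENNReal.ofReal_le_ofReal hfinal
  have hmain : ∫⁻ ω, ENNReal.ofReal (X ω ^ (-p)) ∂P ≤ ENNReal.ofReal ((m + 2) * δ₁ ^ (-p)) := by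
    rw [hlc]; exact hgoal
  simpa only [hX_def] using hmain
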